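/- Let Γ1 be the graph on {a,b,c,d,e} with edges {ad, ae, be, cd, de} and Γ2 the graph on {a1,a2,b,c,d,e} with edges {a1a2, a1c, a1d, a1e, a2b, a2d, a2e, be, cd, de}. The homomorphism φ : G(Γ1) → G(Γ2) determined by a ↦ a1·a2, b ↦ b, c ↦ c, d ↦ d, e ↦ e is injective. -/

import Mathlib

/-!
Let `σ` be the partial conjugation `b ↦ a b a⁻¹` of `G(Γ1)` fixing `a, c, d, e`; it is an
automorphism because the only neighbour `e` of `b` is adjacent to `a`. In `H = G(Γ1) ⋊_σ ℤ`, with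
`t` generating `ℤ`, the assignment `a1 ↦ t`, `a2 ↦ a t⁻¹`, `x ↦ x` otherwise respects the relations
of `G(Γ2)`: `t` commutes with `a, c, d, e` since `σ` fixes them, and `a t⁻¹` commutes with `b`
since `t⁻¹ b t = a⁻¹ b a`. The resulting map `G(Γ2) → H` sends `φ a = a1 a2` to
`t a t⁻¹ = σ a = a`, so composed with `φ` it is the inclusion of `G(Γ1)` in `H`, which is injective.
-/

open scoped commutatorElement in
/-- The defining relators of the right-angled Artin group of a graph `G`:
commutators of pairs of adjacent vertices. -/
def raagRels {V : Type*} (G : SimpleGraph V) : Set (FreeGroup V) :=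
  {r | ∃ x y : V, G.Adj x y ∧ r = ⁅FreeGroup.of x, FreeGroup.of y⁆}

/-- The right-angled Artin group (partially commutative group) of a graph. -/
abbrev Raag {V : Type*} (G : SimpleGraph V) : Type _ := PresentedGroup (raagRels G)

/-- The canonical generator of a RAAG corresponding to a vertex. -/
def Raag.gen {V : Type*} (G : SimpleGraph V) (x : V) : Raag G := PresentedGroup.of x

/-- Vertices of Γ1. -/
inductive V1 | a | b | c | d | e
deriving DecidableEq

/-- Vertices of Γ2. -/
inductive V2 | a1 | a2 | b | c | d | e
deriving DecidableEq

open V1 in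
/-- Γ1 : edges {ad, ae, be, cd, de}. -/
def Gamma1 : SimpleGraph V1 :=
  SimpleGraph.fromRel (fun x y => (x, y) ∈ [(a, d), (a, e), (b, e), (c, d), (d, e)])

open V2 in
/-- Γ2 : edges {a1a2, a1c, a1d, a1e, a2b, a2d, a2e, be, cd, de}. -/
def Gamma2 : SimpleGraph V2 :=
  SimpleGraph.fromRel (fun x y => (x, y) ∈
    [(a1, a2), (a1, c), (a1, d), (a1, e), (a2, b), (a2, d), (a2, e), (b, e), (c, d), (d, e)])

theorem Commute.conj_left {M : Type*} [Group M] {w x y : M} (hw : Commute w y)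
    (hx : Commute x y) : Commute (w * x * w⁻¹) y :=
  (hw.mul_left hx).mul_left hw.inv_left

theorem SemidirectProduct.commute_inl_iff {N G : Type*} [Group N] [Group G]
    {φ : G →* MulAut N} (x : N ⋊[φ] G) (n : N) :
    Commute x (inl n) ↔ x.left * φ x.right n = n * x.left := by
  simp [Commute, SemiconjBy, SemidirectProduct.ext_iff]

theorem SimpleGraph.commute_of_fromRel_adj {V H : Type*} [Group H] {r : V → V → Prop}
    {f : V → H} (hr : ∀ x y, r x y → Commute (f x) (f y)) {x y : V}
    (h : (SimpleGraph.fromRel r).Adj x y) : Commute (f x) (f y) :=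
  h.2.elim (hr x y) fun h' => (hr y x h').symm

def SimpleGraph.StarSeparates {V : Type*} (G : SimpleGraph V) (v : V) (S : Set V) : Prop :=
  ∀ ⦃x y⦄, x ∈ S → y ∉ S → G.Adj x y → y = v ∨ G.Adj v y

namespace Raag

variable {V : Type*} {G : SimpleGraph V}

open scoped commutatorElement in
theorem commute_gen {x y : V} (h : G.Adj x y) : Commute (gen G x) (gen G y) := by
  rw [← commutatorElement_eq_one_iff_commute]
  exact (map_commutatorElement (PresentedGroup.mk _) _ _).symm.trans
    (PresentedGroup.one_of_mem ⟨x, y, h, rfl⟩)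

section Lift

variable {H : Type*} [Group H]

def lift (f : V → H) (hf : ∀ x y, G.Adj x y → Commute (f x) (f y)) : Raag G →* H :=
  PresentedGroup.toGroup <| by
    rintro _ ⟨x, y, hxy, rfl⟩
    rw [map_commutatorElement, FreeGroup.lift_apply_of, FreeGroup.lift_apply_of]
    exact commutatorElement_eq_one_iff_commute.2 (hf x y hxy)

@[simp]
theorem lift_gen (f : V → H) (hf : ∀ x y, G.Adj x y → Commute (f x) (f y)) (x : V) :
    lift f hf (gen G x) = f x :=
  PresentedGroup.toGroup.of _

theorem hom_ext {f g : Raag G →* H} (h : ∀ x, f (gen G x) = g (gen G x)) : f = g :=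
  PresentedGroup.ext h

end Lift

section PartialConj

variable {v : V} {S : Set V} [DecidablePred (· ∈ S)]

variable (G v S) in
def partialConjFun (k : ℤ) (x : V) : Raag G :=
  if x ∈ S then gen G v ^ k * gen G x * (gen G v ^ k)⁻¹ else gen G x

theorem commute_partialConjFun_of_mem_of_notMem (hS : G.StarSeparates v S) (k : ℤ) {x y : V}
    (hx : x ∈ S) (hy : y ∉ S) (h : G.Adj x y) :
    Commute (partialConjFun G v S k x) (partialConjFun G v S k y) := by
  have hvy : Commute (gen G v) (gen G y) := by
    obtain rfl | hvy := hS hx hy h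
    exacts [Commute.refl _, commute_gen hvy]
  simpa [partialConjFun, hx, hy] using (hvy.zpow_left k).conj_left (commute_gen h)

theorem commute_partialConjFun (hS : G.StarSeparates v S) (k : ℤ) (x y : V) (h : G.Adj x y) :
    Commute (partialConjFun G v S k x) (partialConjFun G v S k y) := by
  by_cases hx : x ∈ S <;> by_cases hy : y ∈ S
  · simpa [partialConjFun, hx, hy] using commute_gen h
  · exact commute_partialConjFun_of_mem_of_notMem hS k hx hy h
  · exact (commute_partialConjFun_of_mem_of_notMem hS k hy hx h.symm).symm
  · simpa [partialConjFun, hx, hy] using commute_gen h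

def partialConjHom (hS : G.StarSeparates v S) (k : ℤ) : Raag G →* Raag G :=
  lift (partialConjFun G v S k) (commute_partialConjFun hS k)

variable (hS : G.StarSeparates v S)

theorem partialConjHom_gen_of_mem (k : ℤ) {x : V} (hx : x ∈ S) :
    partialConjHom hS k (gen G x) = gen G v ^ k * gen G x * (gen G v ^ k)⁻¹ := by
  simp [partialConjHom, partialConjFun, hx]

theorem partialConjHom_gen_of_notMem (k : ℤ) {x : V} (hx : x ∉ S) :
    partialConjHom hS k (gen G x) = gen G x := by
  simp [partialConjHom, partialConjFun, hx]

theorem partialConjHom_neg_comp (hv : v ∉ S) (k : ℤ) :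
    (partialConjHom hS (-k)).comp (partialConjHom hS k) = MonoidHom.id _ := by
  refine hom_ext fun x => ?_
  by_cases hx : x ∈ S
  · simp [partialConjHom_gen_of_mem hS _ hx, partialConjHom_gen_of_notMem hS _ hv]
    group
  · simp [partialConjHom_gen_of_notMem hS _ hx]

def partialConj (hv : v ∉ S) : MulAut (Raag G) :=
  MonoidHom.toMulEquiv (partialConjHom hS 1) (partialConjHom hS (-1))
    (by simpa using partialConjHom_neg_comp hS hv 1)
    (by simpa using partialConjHom_neg_comp hS hv (-1))

@[simp]
theorem partialConj_apply (hv : v ∉ S) (x : Raag G) :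
    partialConj hS hv x = partialConjHom hS 1 x :=
  rfl

@[simp]
theorem partialConj_symm_apply (hv : v ∉ S) (x : Raag G) :
    (partialConj hS hv).symm x = partialConjHom hS (-1) x :=
  rfl

end PartialConj

end Raag

open SemidirectProduct

theorem Gamma1.starSeparates_a_b : Gamma1.StarSeparates V1.a {V1.b} := by
  rintro x y rfl hy h
  cases y <;> simp_all [Gamma1]

abbrev Gamma1.conjBByA : MulAut (Raag Gamma1) :=
  Raag.partialConj Gamma1.starSeparates_a_b (by simp)

abbrev Gamma1Ext : Type := Raag Gamma1 ⋊[zpowersHom _ Gamma1.conjBByA] Multiplicative ℤ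

open V2 in
def gamma2GenToExt : V2 → Gamma1Ext
  | a1 => inr (.ofAdd 1)
  | a2 => inl (Raag.gen Gamma1 .a) * (inr (.ofAdd 1))⁻¹
  | b => inl (Raag.gen Gamma1 .b)
  | c => inl (Raag.gen Gamma1 .c)
  | d => inl (Raag.gen Gamma1 .d)
  | e => inl (Raag.gen Gamma1 .e)

theorem commute_gamma2GenToExt (x y : V2) (h : Gamma2.Adj x y) :
    Commute (gamma2GenToExt x) (gamma2GenToExt y) := by
  refine SimpleGraph.commute_of_fromRel_adj (fun x y hxy => ?_) h
  simp only [List.mem_cons, Prod.mk.injEq, List.mem_nil_iff, or_false] at hxy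
  rcases hxy with ⟨rfl, rfl⟩ | ⟨rfl, rfl⟩ | ⟨rfl, rfl⟩ | ⟨rfl, rfl⟩ | ⟨rfl, rfl⟩ | ⟨rfl, rfl⟩ |
    ⟨rfl, rfl⟩ | ⟨rfl, rfl⟩ | ⟨rfl, rfl⟩ | ⟨rfl, rfl⟩
  case inl =>
    refine .mul_right ?_ (Commute.refl _).inv_right
    simp [gamma2GenToExt, commute_inl_iff, Raag.partialConjHom_gen_of_notMem]
  all_goals simp [gamma2GenToExt, commute_inl_iff, Raag.partialConjHom_gen_of_mem,
    Raag.partialConjHom_gen_of_notMem, mul_assoc]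
  all_goals exact (Raag.commute_gen (by simp [Gamma1])).eq

def gamma2ToExt : Raag Gamma2 →* Gamma1Ext := Raag.lift gamma2GenToExt commute_gamma2GenToExt

/-- The homomorphism φ : G(Γ1) → G(Γ2) determined by a ↦ a1·a2 and fixing
b, c, d, e is injective. -/
theorem hom_Gamma1_to_Gamma2_injective (φ : Raag Gamma1 →* Raag Gamma2)
    (ha : φ (Raag.gen Gamma1 V1.a) = Raag.gen Gamma2 V2.a1 * Raag.gen Gamma2 V2.a2)
    (hb : φ (Raag.gen Gamma1 V1.b) = Raag.gen Gamma2 V2.b)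
    (hc : φ (Raag.gen Gamma1 V1.c) = Raag.gen Gamma2 V2.c)
    (hd : φ (Raag.gen Gamma1 V1.d) = Raag.gen Gamma2 V2.d)
    (he : φ (Raag.gen Gamma1 V1.e) = Raag.gen Gamma2 V2.e) :
    Function.Injective φ := by
  have hcomp : gamma2ToExt.comp φ = inl := Raag.hom_ext fun x => by
    cases x <;> simp [ha, hb, hc, hd, he, gamma2ToExt, gamma2GenToExt, ← mul_assoc, ← map_inv,
      ← inl_aut, Raag.partialConjHom_gen_of_notMem]
  refine Function.Injective.of_comp (f := gamma2ToExt) ?_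
  rw [← MonoidHom.coe_comp, hcomp]
  exact inl_injective
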